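/- Let S be the 8×8 complex matrix with rows/columns indexed by (1,2,3,4,1̂,2̂,3̂,4̂): S = (1/2)·[[0,0,0,1,−1,0,0,0],[1,0,0,0,0,−1,0,0],[0,1,0,0,0,0,−1,0],[0,0,1,0,0,0,0,−1],[−1,0,0,0,0,1,0,0],[0,−1,0,0,0,0,1,0],[0,0,−1,0,0,0,0,1],[0,0,0,−1,1,0,0,0]]. Then the characteristic polynomial of S is λ⁶(λ² − 1); i.e., the eigenvalues of S are 1, −1, and 0 with multiplicity 6. In particular S has exactly 2 nonzero eigenvalues. -/
import Mathlib


open Polynomial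

@[simp] lemma vec8m_0 {α : Type*} (a0 a1 a2 a3 a4 a5 a6 a7 : α) :
    ![a0,a1,a2,a3,a4,a5,a6,a7] ⟨0, by omega⟩ = a0 := rfl
@[simp] lemma vec8m_1 {α : Type*} (a0 a1 a2 a3 a4 a5 a6 a7 : α) :
    ![a0,a1,a2,a3,a4,a5,a6,a7] ⟨1, by omega⟩ = a1 := rfl
@[simp] lemma vec8m_2 {α : Type*} (a0 a1 a2 a3 a4 a5 a6 a7 : α) :
    ![a0,a1,a2,a3,a4,a5,a6,a7] ⟨2, by omega⟩ = a2 := rfl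
@[simp] lemma vec8m_3 {α : Type*} (a0 a1 a2 a3 a4 a5 a6 a7 : α) :
    ![a0,a1,a2,a3,a4,a5,a6,a7] ⟨3, by omega⟩ = a3 := rfl
@[simp] lemma vec8m_4 {α : Type*} (a0 a1 a2 a3 a4 a5 a6 a7 : α) :
    ![a0,a1,a2,a3,a4,a5,a6,a7] ⟨4, by omega⟩ = a4 := rfl
@[simp] lemma vec8m_5 {α : Type*} (a0 a1 a2 a3 a4 a5 a6 a7 : α) :
    ![a0,a1,a2,a3,a4,a5,a6,a7] ⟨5, by omega⟩ = a5 := rfl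
@[simp] lemma vec8m_6 {α : Type*} (a0 a1 a2 a3 a4 a5 a6 a7 : α) :
    ![a0,a1,a2,a3,a4,a5,a6,a7] ⟨6, by omega⟩ = a6 := rfl
@[simp] lemma vec8m_7 {α : Type*} (a0 a1 a2 a3 a4 a5 a6 a7 : α) :
    ![a0,a1,a2,a3,a4,a5,a6,a7] ⟨7, by omega⟩ = a7 := rfl

/-- Similar matrices have the same characteristic polynomial. -/
lemma charpoly_of_similar {n : Type*} [Fintype n] [DecidableEq n]
    (S P Q T : Matrix n n ℂ) (hPQ : P * Q = 1) (h : S * P = P * T) :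
    S.charpoly = T.charpoly := by
  have hdet : P.det * Q.det = 1 := by rw [← Matrix.det_mul, hPQ, Matrix.det_one]
  have hPd : P.det ≠ 0 := fun h0 => by simp [h0] at hdet
  have key : Matrix.charmatrix S * P.map C = P.map C * Matrix.charmatrix T := by
    simp only [Matrix.charmatrix, sub_mul, mul_sub]
    congr 1
    · exact (Matrix.scalar_commute X (fun r => Commute.all X r) (P.map C)).eq
    · rw [show P.map ⇑C = C.mapMatrix P from rfl, ← _root_.map_mul, ← _root_.map_mul, h]
  have := congrArg Matrix.det key
  rw [Matrix.det_mul, Matrix.det_mul] at this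
  have hC : (P.map C).det ≠ 0 := by
    have : (P.map C).det = C P.det := by
      rw [← RingHom.mapMatrix_apply, ← RingHom.map_det]
    rw [this]
    simpa using hPd
  rw [Matrix.charpoly, Matrix.charpoly]
  exact mul_right_cancel₀ hC (by rw [this, mul_comm])

open Complex in
set_option maxHeartbeats 2000000 in
/-- Characteristic polynomial of the bond-scattering matrix of the square with two
halflines at each vertex: `λ⁶(λ² - 1)`; eigenvalues `1`, `-1` and `0` (multiplicity 6);
in particular exactly 2 nonzero eigenvalues. -/
theorem square_charpoly :
    let S : Matrix (Fin 8) (Fin 8) ℂ := (1/2 : ℂ) •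
      !![0, 0, 0, 1, -1, 0, 0, 0;
         1, 0, 0, 0, 0, -1, 0, 0;
         0, 1, 0, 0, 0, 0, -1, 0;
         0, 0, 1, 0, 0, 0, 0, -1;
         -1, 0, 0, 0, 0, 1, 0, 0;
         0, -1, 0, 0, 0, 0, 1, 0;
         0, 0, -1, 0, 0, 0, 0, 1;
         0, 0, 0, -1, 1, 0, 0, 0]
    S.charpoly = X ^ 6 * (X ^ 2 - 1) ∧
    S.charpoly.roots = {1, -1, 0, 0, 0, 0, 0, 0} ∧
    (S.charpoly.roots.filter (· ≠ 0)).card = 2 := by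
  intro S
  have hcp : S.charpoly = X ^ 6 * (X ^ 2 - 1) := by
    set P : Matrix (Fin 8) (Fin 8) ℂ :=
      !![1,1,1,1,1,1,1,1;
         1,1,-1,-1,I,I,-I,-I;
         1,1,1,1,-1,-1,-1,-1;
         1,1,-1,-1,-I,-I,I,I;
         -1,1,1,-1,-I,0,I,0;
         -1,1,-1,1,1,0,1,0;
         -1,1,1,-1,I,0,-I,0;
         -1,1,-1,1,-1,0,-1,0] with hP
    set Q : Matrix (Fin 8) (Fin 8) ℂ :=
      !![1/8,1/8,1/8,1/8,-1/8,-1/8,-1/8,-1/8;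
         1/8,1/8,1/8,1/8,1/8,1/8,1/8,1/8;
         1/8,-1/8,1/8,-1/8,1/8,-1/8,1/8,-1/8;
         1/8,-1/8,1/8,-1/8,-1/8,1/8,-1/8,1/8;
         0,0,0,0,I/4,1/4,-I/4,-1/4;
         1/4,-I/4,-1/4,I/4,-I/4,-1/4,I/4,1/4;
         0,0,0,0,-I/4,1/4,I/4,-1/4;
         1/4,I/4,-1/4,-I/4,I/4,-1/4,-I/4,1/4] with hQ
    set T : Matrix (Fin 8) (Fin 8) ℂ :=
      !![1,0,0,0,0,0,0,0;
         0,0,0,0,0,0,0,0;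
         0,0,-1,0,0,0,0,0;
         0,0,0,0,0,0,0,0;
         0,0,0,0,0,-I/2,0,0;
         0,0,0,0,0,0,0,0;
         0,0,0,0,0,0,0,I/2;
         0,0,0,0,0,0,0,0] with hT
    have hPQ : P * Q = 1 := by
      ext i j
      fin_cases i <;> fin_cases j <;>
        · simp only [hP, hQ, Matrix.mul_apply, Fin.sum_univ_succ, Fin.sum_univ_zero,
            Matrix.of_apply, Matrix.cons_val_zero, Matrix.cons_val_succ,
            vec8m_0, vec8m_1, vec8m_2, vec8m_3, vec8m_4, vec8m_5, vec8m_6, vec8m_7,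
            Matrix.one_apply]
          norm_num
          try ring_nf
          try simp [Complex.I_sq]
          try ring_nf
          try norm_num
    have hSP : S * P = P * T := by
      ext i j
      fin_cases i <;> fin_cases j <;>
        · simp only [S, hP, hT, Matrix.mul_apply, Matrix.smul_apply, Fin.sum_univ_succ,
            Fin.sum_univ_zero, Matrix.of_apply, Matrix.cons_val_zero, Matrix.cons_val_succ,
            vec8m_0, vec8m_1, vec8m_2, vec8m_3, vec8m_4, vec8m_5, vec8m_6, vec8m_7]
          norm_num
          try ring_nf
          try simp [Complex.I_sq]
          try ring_nf
          try norm_num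
    rw [charpoly_of_similar S P Q T hPQ hSP]
    have htri : T.BlockTriangular id := by
      intro i j hij
      fin_cases i <;> fin_cases j <;> first | rfl | exact absurd hij (by decide)
    rw [Matrix.charpoly_of_upperTriangular T htri]
    simp only [hT, Fin.prod_univ_succ, Fin.prod_univ_zero, Matrix.of_apply,
      Matrix.cons_val_zero, Matrix.cons_val_succ, _root_.map_one, _root_.map_zero,
      _root_.map_neg, mul_one]
    ring
  have hroots : S.charpoly.roots = {1, -1, 0, 0, 0, 0, 0, 0} := by
    rw [hcp]
    have hfac : ((X:ℂ[X])^6 * (X^2-1)) = ((X - C 1) * (X - C (-1))) * X^6 := by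
      simp only [C_1, map_neg]; ring
    rw [hfac, Polynomial.roots_mul (((monic_X_sub_C 1).mul (monic_X_sub_C (-1))).mul
        (monic_X_pow 6)).ne_zero,
      Polynomial.roots_mul ((monic_X_sub_C 1).mul (monic_X_sub_C (-1))).ne_zero,
      Polynomial.roots_X_sub_C, Polynomial.roots_X_sub_C, Polynomial.roots_pow,
      Polynomial.roots_X]
    rfl
  refine ⟨hcp, hroots, ?_⟩
  rw [hroots]
  simp only [Multiset.insert_eq_cons, Multiset.filter_cons, Multiset.filter_singleton]
  norm_num
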